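/- For P ⊆ {1,…,n−1} let 𝓑_P = {σ_v·σ_w : v ∈ W^P, w ∈ W_P} denote the set of pointwise products of Schubert classes, regarded as a set of functions W → R. If P, Q ⊆ {1,…,n−1} are distinct subsets and it is not the case that {P, Q} = {∅, {1,…,n−1}}, then 𝓑_P ≠ 𝓑_Q. -/

import Mathlib

noncomputable section

open MvPolynomial
open scoped Classical

/-- The polynomial ring `R = ℂ[x₁, …, xₙ]`. -/
abbrev BilleyR (n : ℕ) := MvPolynomial (Fin n) ℂ

/-- The simple transposition `sᵢ = (i, i+1)` in the symmetric group on `{1, …, n}`. -/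
def sTr (n : ℕ) (i : Fin (n - 1)) : Equiv.Perm (Fin n) :=
  Equiv.swap ⟨i.1, by have := i.isLt; omega⟩ ⟨i.1 + 1, by have := i.isLt; omega⟩

/-- The length `ℓ(w)`: the minimal `k` such that `w` is a product of `k` simple
transpositions. -/
def len (n : ℕ) (w : Equiv.Perm (Fin n)) : ℕ :=
  sInf {k | ∃ l : List (Fin (n - 1)), l.length = k ∧ (l.map (sTr n)).prod = w}

/-- `l` is a reduced word for `w`: the product of the corresponding simple transpositions
is `w` and the length of `l` is `ℓ(w)`. -/
def IsRedWord (n : ℕ) (l : List (Fin (n - 1))) (w : Equiv.Perm (Fin n)) : Prop :=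
  (l.map (sTr n)).prod = w ∧ l.length = len n w

/-- The simple root `αᵢ = xᵢ - x_{i+1}`. -/
def alphaR (n : ℕ) (i : Fin (n - 1)) : BilleyR n :=
  X ⟨i.1, by have := i.isLt; omega⟩ - X ⟨i.1 + 1, by have := i.isLt; omega⟩

/-- Given a word `b = (b₁, …, b_m)`, the polynomial
`r(j, u) = (s_{b₁} ⋯ s_{b_{j-1}})(α_{b_j})` (with `j` zero-indexed here). -/
def rPoly (n : ℕ) (b : List (Fin (n - 1))) (j : Fin b.length) : BilleyR n :=
  rename (⇑(((b.take j.1).map (sTr n)).prod)) (alphaR n (b.get j))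

/-- Billey's formula with respect to the word `b` for `u`:
`σ_v(u) = Σ ∏ₜ r(jₜ, u)`, summed over all strictly increasing index sequences
`j₁ < ⋯ < j_{ℓ(v)}` into `b` such that `s_{b_{j₁}} ⋯ s_{b_{j_{ℓ(v)}}} = v`. -/
def billeyWord (n : ℕ) (b : List (Fin (n - 1))) (v : Equiv.Perm (Fin n)) : BilleyR n :=
  ∑ J ∈ Finset.univ.filter (fun J : Finset (Fin b.length) =>
      J.card = len n v ∧
        ((J.sort (· ≤ ·)).map (fun j => sTr n (b.get j))).prod = v),
    ∏ j ∈ J, rPoly n b j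

/-- The Billey polynomial `σ_v(u)`, computed from a choice of reduced word for `u`
(its value is independent of this choice). -/
def sigma (n : ℕ) (v u : Equiv.Perm (Fin n)) : BilleyR n :=
  if h : ∃ b : List (Fin (n - 1)), IsRedWord n b u then billeyWord n h.choose v else 0

/-- The standard parabolic subgroup `W_P` generated by `{sᵢ : i ∈ P}`. -/
def WPar (n : ℕ) (P : Set (Fin (n - 1))) : Subgroup (Equiv.Perm (Fin n)) :=
  Subgroup.closure (sTr n '' P)

/-- The set `W^P` of minimal-length coset representatives of `W / W_P`. -/
def minReps (n : ℕ) (P : Set (Fin (n - 1))) : Set (Equiv.Perm (Fin n)) :=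
  {v | ∀ u ∈ WPar n P, len n v ≤ len n (v * u)}

/-- The parabolic family `𝓑_P = {σ_v·σ_w : v ∈ W^P, w ∈ W_P}` of pointwise products of
Schubert classes, as a set of functions `W → R`. -/
def parabolicBasis (n : ℕ) (P : Set (Fin (n - 1))) : Set (Equiv.Perm (Fin n) → BilleyR n) :=
  {f | ∃ v ∈ minReps n P, ∃ w ∈ WPar n P, f = fun u => sigma n v u * sigma n w u}


/-! For adjacent nodes `c, d` of the Dynkin diagram (the path graph on `Fin (n - 1)`), the Schubert
class of `s_c s_d` lies in `𝓑_P` exactly when `d ∈ P → c ∈ P`. Indeed `(c, d)` is the only reduced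
word of `s_c s_d`, and evaluating Billey's formula on it shows that `σ_{s_c s_d}` factors as
`σ_v σ_w` only trivially; `s_c s_d` lies in `W_P` iff `c, d ∈ P` and is a minimal coset
representative iff `d ∉ P`. So `𝓑_P = 𝓑_Q` forces `P` and `Q` to satisfy the same implications
along every edge of the diagram, and since the diagram is connected, one index in `P \ Q` spreads
to all of them: `P = univ` and `Q = ∅`. -/

open SimpleGraph
open scoped Pointwise

section

variable {n : ℕ} {c d : Fin (n - 1)} {P : Set (Fin (n - 1))}

lemma sTr_apply_val (i : Fin (n - 1)) (x : Fin n) :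
    (sTr n i x).1 = if x.1 = i.1 then i.1 + 1 else if x.1 = i.1 + 1 then i.1 else x.1 := by
  unfold sTr
  rw [Equiv.swap_apply_def]
  split_ifs <;> simp_all [Fin.ext_iff]

lemma sTr_inv (i : Fin (n - 1)) : (sTr n i)⁻¹ = sTr n i := Equiv.swap_inv _ _

lemma sTr_mul_self (i : Fin (n - 1)) : sTr n i * sTr n i = 1 := Equiv.swap_mul_self _ _

lemma sign_sTr (i : Fin (n - 1)) : Equiv.Perm.sign (sTr n i) = -1 :=
  Equiv.Perm.sign_swap (by simp [Fin.ext_iff])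

lemma sTr_injective : Function.Injective (sTr n) := by
  intro i j h
  have := congrArg Fin.val (Equiv.congr_fun h ⟨i.1, by omega⟩)
  simp only [sTr_apply_val] at this
  ext
  split_ifs at this <;> omega

lemma sTr_ne_one (i : Fin (n - 1)) : sTr n i ≠ 1 := by
  intro h
  simpa [h] using sign_sTr (n := n) i

lemma mclosure_range_sTr : Submonoid.closure (Set.range (sTr n)) = ⊤ := by
  rcases n with _ | m
  · exact eq_top_iff.2 fun x _ => Subsingleton.elim x 1 ▸ one_mem _
  · exact Equiv.Perm.mclosure_swap_castSucc_succ m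

lemma exists_prod_map_sTr_eq (w : Equiv.Perm (Fin n)) :
    ∃ l : List (Fin (n - 1)), (l.map (sTr n)).prod = w := by
  have hw : w ∈ MonoidHom.mrange (FreeMonoid.lift (sTr n)) := by
    rw [FreeMonoid.mrange_lift, mclosure_range_sTr]; trivial
  obtain ⟨l, rfl⟩ := hw
  exact ⟨l.toList, (FreeMonoid.lift_apply _ _).symm⟩

lemma len_le_length {w : Equiv.Perm (Fin n)} {l : List (Fin (n - 1))}
    (h : (l.map (sTr n)).prod = w) : len n w ≤ l.length :=
  Nat.sInf_le ⟨l, rfl, h⟩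

lemma exists_isRedWord (w : Equiv.Perm (Fin n)) : ∃ l, IsRedWord n l w := by
  obtain ⟨l, hl⟩ := exists_prod_map_sTr_eq w
  have hne : {k | ∃ l' : List (Fin (n - 1)), l'.length = k ∧ (l'.map (sTr n)).prod = w}.Nonempty :=
    ⟨l.length, l, rfl, hl⟩
  obtain ⟨l', hlen, hprod⟩ := Nat.sInf_mem hne
  exact ⟨l', hprod, hlen⟩

lemma sign_prod_map_sTr (l : List (Fin (n - 1))) :
    Equiv.Perm.sign (l.map (sTr n)).prod = (-1) ^ l.length := by
  induction l with
  | nil => simp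
  | cons i l ih => simp [pow_succ, ih, sign_sTr, mul_comm]

lemma sign_eq_neg_one_pow_len (w : Equiv.Perm (Fin n)) :
    Equiv.Perm.sign w = (-1) ^ len n w := by
  obtain ⟨l, rfl, hlen⟩ := exists_isRedWord w
  rw [← hlen, sign_prod_map_sTr]

lemma len_eq_zero_iff {w : Equiv.Perm (Fin n)} : len n w = 0 ↔ w = 1 := by
  refine ⟨fun h => ?_, fun h => Nat.le_zero.1 (len_le_length (l := []) h.symm)⟩
  obtain ⟨l, rfl, hlen⟩ := exists_isRedWord w
  rw [List.eq_nil_of_length_eq_zero (hlen.trans h)]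
  rfl

lemma len_one : len n (1 : Equiv.Perm (Fin n)) = 0 := len_eq_zero_iff.2 rfl

lemma len_sTr (i : Fin (n - 1)) : len n (sTr n i) = 1 := by
  have : len n (sTr n i) ≤ 1 := len_le_length (l := [i]) (by simp)
  have : len n (sTr n i) ≠ 0 := len_eq_zero_iff.not.2 (sTr_ne_one i)
  omega

lemma sTr_mul_sTr_ne_one (hcd : c ≠ d) : sTr n c * sTr n d ≠ 1 := by
  rw [Ne, mul_eq_one_iff_eq_inv, sTr_inv, sTr_injective.eq_iff]
  exact hcd

lemma len_sTr_mul_sTr (hcd : c ≠ d) : len n (sTr n c * sTr n d) = 2 := by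
  have hle : len n (sTr n c * sTr n d) ≤ 2 := len_le_length (l := [c, d]) (by simp)
  have hne : len n (sTr n c * sTr n d) ≠ 0 := len_eq_zero_iff.not.2 (sTr_mul_sTr_ne_one hcd)
  have heven : Even (len n (sTr n c * sTr n d)) := by
    have := sign_eq_neg_one_pow_len (sTr n c * sTr n d)
    rw [map_mul, sign_sTr, sign_sTr] at this
    exact (neg_one_pow_eq_one_iff_even (by decide)).1 this.symm
  rcases heven with ⟨k, hk⟩
  omega

lemma sTr_mul_sTr_ne_sTr (hcd : c ≠ d) (e : Fin (n - 1)) :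
    sTr n c * sTr n d ≠ sTr n e := fun h => by
  simpa [h, len_sTr] using len_sTr_mul_sTr hcd

lemma dist_apply_le_one_of_len_le_one {w : Equiv.Perm (Fin n)} (hw : len n w ≤ 1) (x : Fin n) :
    (w x).1 ≤ x.1 + 1 ∧ x.1 ≤ (w x).1 + 1 := by
  obtain ⟨l, rfl, hlen⟩ := exists_isRedWord w
  match l, hlen ▸ hw with
  | [], _ => simp
  | [e], _ =>
    simp only [List.map_cons, List.map_nil, List.prod_cons, List.prod_nil, mul_one, sTr_apply_val]
    split_ifs <;> omega

lemma sTr_apply_sTr_apply_eq_add_two_iff {x : Fin n} :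
    (sTr n c (sTr n d x)).1 = x.1 + 2 ↔ d.1 = x.1 ∧ c.1 = x.1 + 1 := by
  simp only [sTr_apply_val]
  split_ifs <;> omega

lemma sTr_apply_sTr_apply_add_two_eq_iff {x : Fin n} :
    (sTr n c (sTr n d x)).1 + 2 = x.1 ↔ d.1 + 1 = x.1 ∧ c.1 + 2 = x.1 := by
  simp only [sTr_apply_val]
  split_ifs <;> omega

lemma sTr_mul_sTr_eq_iff (hcd : (pathGraph (n - 1)).Adj c d) {c' d' : Fin (n - 1)} :
    sTr n c' * sTr n d' = sTr n c * sTr n d ↔ c' = c ∧ d' = d := by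
  refine ⟨fun h => ?_, by rintro ⟨rfl, rfl⟩; rfl⟩
  have key (x : Fin n) : sTr n c' (sTr n d' x) = sTr n c (sTr n d x) := Equiv.congr_fun h x
  -- `s_c s_d` moves exactly one point by two steps; that point and the direction pin down `c, d`.
  rw [pathGraph_adj] at hcd
  rcases hcd with hcd | hcd
  · have := (sTr_apply_sTr_apply_add_two_eq_iff (c := c) (d := d) (x := ⟨d.1 + 1, by omega⟩)).2
      ⟨rfl, by simp only; omega⟩
    rw [← key, sTr_apply_sTr_apply_add_two_eq_iff] at this
    dsimp only at this
    constructor <;> ext <;> omega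
  · have := (sTr_apply_sTr_apply_eq_add_two_iff (c := c) (d := d) (x := ⟨d.1, by omega⟩)).2
      ⟨rfl, by simp only; omega⟩
    rw [← key, sTr_apply_sTr_apply_eq_add_two_iff] at this
    dsimp only at this
    constructor <;> ext <;> omega

lemma isRedWord_sTr_mul_sTr_iff (hcd : (pathGraph (n - 1)).Adj c d) {l : List (Fin (n - 1))} :
    IsRedWord n l (sTr n c * sTr n d) ↔ l = [c, d] := by
  refine ⟨fun ⟨hprod, hlen⟩ => ?_, by rintro rfl; exact ⟨by simp, (len_sTr_mul_sTr hcd.ne).symm⟩⟩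
  rw [len_sTr_mul_sTr hcd.ne] at hlen
  match l, hlen with
  | [c', d'], _ =>
    simp only [List.map_cons, List.map_nil, List.prod_cons, List.prod_nil, mul_one] at hprod
    obtain ⟨rfl, rfl⟩ := (sTr_mul_sTr_eq_iff hcd).1 hprod
    rfl

lemma billeyWord_one (b : List (Fin (n - 1))) : billeyWord n b 1 = 1 := by
  have hfilter : Finset.univ.filter (fun J : Finset (Fin b.length) => J.card = len n 1 ∧
      ((J.sort (· ≤ ·)).map (fun j => sTr n (b.get j))).prod = 1) = {∅} := by
    ext J
    simp only [Finset.mem_filter, Finset.mem_univ, true_and, Finset.mem_singleton, len_one,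
      Finset.card_eq_zero, and_iff_left_iff_imp]
    rintro rfl
    simp
  rw [billeyWord, hfilter, Finset.sum_singleton, Finset.prod_empty]

lemma sum_finset_fin_two {M : Type*} [AddCommMonoid M] (f : Finset (Fin 2) → M) :
    ∑ J, f J = f ∅ + f {0} + f {1} + f {0, 1} := by
  rw [show (Finset.univ : Finset (Finset (Fin 2))) = {∅, {0}, {1}, {0, 1}} by decide,
    Finset.sum_insert (by decide), Finset.sum_insert (by decide), Finset.sum_insert (by decide),
    Finset.sum_singleton, add_assoc, add_assoc]

lemma billeyWord_pair (hcd : c ≠ d) (v : Equiv.Perm (Fin n)) :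
    billeyWord n [c, d] v =
      (if v = 1 then 1 else 0) + (if v = sTr n c then alphaR n c else 0) +
        (if v = sTr n d then rename (sTr n c) (alphaR n d) else 0) +
        (if v = sTr n c * sTr n d then alphaR n c * rename (sTr n c) (alphaR n d) else 0) := by
  have hcond {k : ℕ} {w : Equiv.Perm (Fin n)} (hw : len n w = k) : k = len n v ∧ w = v ↔ v = w :=
    ⟨fun h => h.2.symm, by rintro rfl; exact ⟨hw.symm, rfl⟩⟩
  rw [billeyWord, Finset.sum_filter]
  refine (sum_finset_fin_two _).trans ?_
  simp [rPoly, Finset.sort_insert, hcond len_one, hcond (len_sTr c), hcond (len_sTr d),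
    hcond (len_sTr_mul_sTr hcd)]

lemma sigma_eq_billeyWord {u : Equiv.Perm (Fin n)} {l : List (Fin (n - 1))}
    (hl : ∀ l', IsRedWord n l' u ↔ l' = l) (v : Equiv.Perm (Fin n)) :
    sigma n v u = billeyWord n l v := by
  have h : ∃ b, IsRedWord n b u := ⟨l, (hl l).2 rfl⟩
  rw [sigma, dif_pos h, (hl _).1 h.choose_spec]

lemma sigma_one (u : Equiv.Perm (Fin n)) : sigma n 1 u = 1 := by
  rw [sigma, dif_pos (exists_isRedWord u), billeyWord_one]

def descPoint (n : ℕ) : Fin n → ℂ := fun i => -2 * i.1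

lemma eval_X_sub_X (x y : Fin n) :
    eval (descPoint n) (X x - X y : BilleyR n) = 2 * ((y.1 : ℂ) - x.1) := by
  simp only [map_sub, eval_X, descPoint]
  ring

lemma eval_alphaR (c : Fin (n - 1)) : eval (descPoint n) (alphaR n c) = 2 := by
  rw [alphaR, eval_X_sub_X]
  push_cast
  ring

lemma eval_rename_sTr_alphaR (hcd : (pathGraph (n - 1)).Adj c d) :
    eval (descPoint n) (rename (sTr n c) (alphaR n d)) = 4 := by
  rw [pathGraph_adj] at hcd
  rw [alphaR, map_sub, rename_X, rename_X, eval_X_sub_X]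
  have hdist : (sTr n c ⟨d.1 + 1, by omega⟩).1 = (sTr n c ⟨d.1, by omega⟩).1 + 2 := by
    simp only [sTr_apply_val]
    split_ifs <;> omega
  rw [hdist]
  push_cast
  ring

lemma eval_sigma_sTr_mul_sTr (hcd : (pathGraph (n - 1)).Adj c d)
    (v : Equiv.Perm (Fin n)) :
    eval (descPoint n) (sigma n v (sTr n c * sTr n d)) =
      (if v = 1 then 1 else 0) + (if v = sTr n c then 2 else 0) + (if v = sTr n d then 4 else 0) +
        (if v = sTr n c * sTr n d then 8 else 0) := by
  rw [sigma_eq_billeyWord (fun _ => isRedWord_sTr_mul_sTr_iff hcd), billeyWord_pair hcd.ne]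
  simp only [map_add, apply_ite (eval _), map_one, map_zero, map_mul, eval_alphaR,
    eval_rename_sTr_alphaR hcd]
  norm_num

/- At `descPoint`, `σ_v(s_c s_d)` is `1, 2, 4, 8` for `v = 1, s_c, s_d, s_c s_d` and `0` otherwise,
so `σ_v σ_w = σ_{s_c s_d}` at `s_c s_d` leaves `{v, w} = {1, s_c s_d}` or `{v, w} ⊆ {s_c, s_d}`.
The latter fails at `s_d s_c`, where `σ_{s_c s_d}` vanishes but `σ_{s_c}` and `σ_{s_d}` do not. -/
lemma eq_one_and_eq_or_eq_and_eq_one_of_sigma_eq_mul (hcd : (pathGraph (n - 1)).Adj c d)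
    {v w : Equiv.Perm (Fin n)}
    (h : ∀ u, sigma n (sTr n c * sTr n d) u = sigma n v u * sigma n w u) :
    (v = 1 ∧ w = sTr n c * sTr n d) ∨ (v = sTr n c * sTr n d ∧ w = 1) := by
  have hc1 := sTr_ne_one (n := n) c
  have hd1 := sTr_ne_one (n := n) d
  have hcd' : sTr n c ≠ sTr n d := sTr_injective.ne hcd.ne
  have hU1 := sTr_mul_sTr_ne_one (n := n) hcd.ne
  have hU'1 := sTr_mul_sTr_ne_one (n := n) hcd.ne.symm
  have hUe := sTr_mul_sTr_ne_sTr (n := n) hcd.ne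
  have hUU' : sTr n c * sTr n d ≠ sTr n d * sTr n c := fun h' =>
    hcd.ne ((sTr_mul_sTr_eq_iff hcd.symm).1 h').1
  have hmem (x : Equiv.Perm (Fin n))
      (hx : eval (descPoint n) (sigma n x (sTr n c * sTr n d)) ≠ 0) :
      x = 1 ∨ x = sTr n c ∨ x = sTr n d ∨ x = sTr n c * sTr n d := by
    by_contra! hne
    simp [eval_sigma_sTr_mul_sTr hcd, hne] at hx
  have h8 : eval (descPoint n) (sigma n v (sTr n c * sTr n d)) *
      eval (descPoint n) (sigma n w (sTr n c * sTr n d)) = 8 := by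
    rw [← map_mul, ← h, eval_sigma_sTr_mul_sTr hcd]
    simp [hU1, hUe]
  have h0 : eval (descPoint n) (sigma n v (sTr n d * sTr n c)) *
      eval (descPoint n) (sigma n w (sTr n d * sTr n c)) = 0 := by
    rw [← map_mul, ← h, eval_sigma_sTr_mul_sTr hcd.symm]
    simp [hU1, hUe, hUU']
  have hv := hmem v (left_ne_zero_of_mul (by rw [h8]; norm_num))
  have hw := hmem w (right_ne_zero_of_mul (by rw [h8]; norm_num))
  rw [eval_sigma_sTr_mul_sTr hcd, eval_sigma_sTr_mul_sTr hcd] at h8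
  rw [eval_sigma_sTr_mul_sTr hcd.symm, eval_sigma_sTr_mul_sTr hcd.symm] at h0
  rcases hv with rfl | rfl | rfl | rfl <;> rcases hw with rfl | rfl | rfl | rfl <;>
    simp [hc1, hd1, hc1.symm, hd1.symm, hcd', hcd'.symm, hU1, hU1.symm, hU'1.symm, hUe, hUU']
      at h8 h0 ⊢

lemma WPar_le_stabilizer {b : Fin (n - 1)} (hb : b ∉ P) :
    WPar n P ≤ MulAction.stabilizer (Equiv.Perm (Fin n)) {x : Fin n | x.1 ≤ b.1} := by
  rw [WPar, Subgroup.closure_le]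
  rintro _ ⟨p, hp, rfl⟩
  have hpb : p.1 ≠ b.1 := fun h => hb (Fin.ext h ▸ hp)
  rw [SetLike.mem_coe, MulAction.mem_stabilizer_set]
  intro x
  simp only [Equiv.Perm.smul_def, Set.mem_ofPred_eq, sTr_apply_val]
  split_ifs <;> omega

lemma apply_le_iff_of_mem_WPar {b : Fin (n - 1)} (hb : b ∉ P) {u : Equiv.Perm (Fin n)}
    (hu : u ∈ WPar n P) (x : Fin n) : (u x).1 ≤ b.1 ↔ x.1 ≤ b.1 :=
  MulAction.mem_stabilizer_set.1 (WPar_le_stabilizer hb hu) x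

lemma sTr_mem_WPar {a : Fin (n - 1)} (ha : a ∈ P) : sTr n a ∈ WPar n P :=
  Subgroup.subset_closure ⟨a, ha, rfl⟩

lemma mem_of_sTr_mul_sTr_mem_WPar (hcd : (pathGraph (n - 1)).Adj c d)
    (h : sTr n c * sTr n d ∈ WPar n P) : c ∈ P := by
  by_contra hc
  rw [pathGraph_adj] at hcd
  have := apply_le_iff_of_mem_WPar hc h (sTr n d ⟨c.1, by omega⟩)
  simp only [Equiv.Perm.mul_apply, sTr_apply_val] at this
  split_ifs at this <;> omega

lemma sTr_mul_sTr_not_mem_minReps (hcd : c ≠ d) (hd : d ∈ P) :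
    sTr n c * sTr n d ∉ minReps n P := fun h => by
  have := h (sTr n d) (sTr_mem_WPar hd)
  rw [len_sTr_mul_sTr hcd, mul_assoc, sTr_mul_self, mul_one, len_sTr] at this
  omega

/- `W_P` preserves `{x | x ≤ d}`; if `s_c s_d u` had length at most one, then `u = s_d s_c w` would
carry a point across `d`. -/
lemma sTr_mul_sTr_mem_minReps (hcd : (pathGraph (n - 1)).Adj c d)
    (hd : d ∉ P) : sTr n c * sTr n d ∈ minReps n P := by
  intro u hu
  rw [len_sTr_mul_sTr hcd.ne]
  by_contra! hlt
  set w := sTr n c * sTr n d * u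
  have hu' : u = sTr n d * sTr n c * w := by
    simp only [w, ← mul_assoc, mul_assoc (sTr n d), sTr_mul_self, one_mul]
  have key (y : Fin n) : ((sTr n d (sTr n c y)).1 ≤ d.1 ↔ (w.symm y).1 ≤ d.1) ∧
      (y.1 ≤ (w.symm y).1 + 1 ∧ (w.symm y).1 ≤ y.1 + 1) := by
    have := apply_le_iff_of_mem_WPar hd hu (w.symm y)
    rw [hu', Equiv.Perm.mul_apply, Equiv.Perm.mul_apply, Equiv.apply_symm_apply] at this
    have hdist := dist_apply_le_one_of_len_le_one (w := w) (by omega) (w.symm y)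
    rw [Equiv.apply_symm_apply] at hdist
    exact ⟨this, hdist⟩
  rw [pathGraph_adj] at hcd
  rcases hcd with hcd | hcd
  · have := key ⟨c.1, by omega⟩
    simp only [sTr_apply_val] at this
    split_ifs at this <;> omega
  · have := key ⟨c.1 + 1, by omega⟩
    simp only [sTr_apply_val] at this
    split_ifs at this <;> omega

lemma sigma_sTr_mul_sTr_mem_parabolicBasis_iff (hcd : (pathGraph (n - 1)).Adj c d) :
    sigma n (sTr n c * sTr n d) ∈ parabolicBasis n P ↔ (d ∈ P → c ∈ P) := by
  constructor
  · rintro ⟨v, hv, w, hw, hvw⟩ hd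
    rcases eq_one_and_eq_or_eq_and_eq_one_of_sigma_eq_mul hcd (congrFun hvw) with
      ⟨-, rfl⟩ | ⟨rfl, -⟩
    · exact mem_of_sTr_mul_sTr_mem_WPar hcd hw
    · exact absurd hv (sTr_mul_sTr_not_mem_minReps hcd.ne hd)
  · intro h
    by_cases hd : d ∈ P
    · refine ⟨1, fun u _ => by simp [len_one], _,
        mul_mem (sTr_mem_WPar (h hd)) (sTr_mem_WPar hd), ?_⟩
      simp [sigma_one]
    · refine ⟨_, sTr_mul_sTr_mem_minReps hcd hd, 1, one_mem _, ?_⟩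
      simp [sigma_one]

end

lemma SimpleGraph.Preconnected.eq_univ_and_eq_empty {V : Type*} {G : SimpleGraph V}
    (hG : G.Preconnected) {P Q : Set V}
    (hPQ : ∀ c d, G.Adj c d → ((d ∈ P → c ∈ P) ↔ (d ∈ Q → c ∈ Q)))
    {k : V} (hkP : k ∈ P) (hkQ : k ∉ Q) : P = Set.univ ∧ Q = ∅ := by
  have hstep {c d : V} (hcd : G.Adj c d) (hc : c ∈ P ∧ c ∉ Q) : d ∈ P ∧ d ∉ Q :=
    ⟨(hPQ d c hcd.symm).2 (absurd · hc.2) hc.1,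
      fun hd => hc.2 ((hPQ c d hcd).1 (fun _ => hc.1) hd)⟩
  have hall (m : V) : m ∈ P ∧ m ∉ Q := by
    induction (reachable_iff_reflTransGen k m).1 (hG k m) with
    | refl => exact ⟨hkP, hkQ⟩
    | tail _ hadj ih => exact hstep hadj ih
  exact ⟨Set.eq_univ_of_forall fun m => (hall m).1,
    Set.eq_empty_of_forall_notMem fun m => (hall m).2⟩

theorem parabolic_bases_distinct_general (n : ℕ) (P Q : Set (Fin (n - 1)))
    (hPQ : P ≠ Q)
    (hexc : ¬ ((P = ∅ ∧ Q = Set.univ) ∨ (P = Set.univ ∧ Q = ∅))) :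
    parabolicBasis n P ≠ parabolicBasis n Q := by
  intro hB
  have hadj (c d : Fin (n - 1)) (hcd : (pathGraph (n - 1)).Adj c d) :
      (d ∈ P → c ∈ P) ↔ (d ∈ Q → c ∈ Q) := by
    rw [← sigma_sTr_mul_sTr_mem_parabolicBasis_iff hcd,
      ← sigma_sTr_mul_sTr_mem_parabolicBasis_iff hcd, hB]
  have hconn := pathGraph_preconnected (n - 1)
  obtain ⟨k, ⟨hkP, hkQ⟩ | ⟨hkQ, hkP⟩⟩ := Set.symmDiff_nonempty.2 hPQ
  · exact hexc (Or.inr (hconn.eq_univ_and_eq_empty hadj hkP hkQ))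
  · exact hexc (Or.inl
      (hconn.eq_univ_and_eq_empty (fun c d hcd => (hadj c d hcd).symm) hkQ hkP).symm)

/-- If `P, Q ⊆ {1, …, n-1}` are distinct subsets and it is not the case
that `{P, Q} = {∅, {1, …, n-1}}`, then `𝓑_P ≠ 𝓑_Q`. -/
theorem parabolic_bases_distinct (n : ℕ) (hn : 2 ≤ n) (P Q : Set (Fin (n - 1)))
    (hPQ : P ≠ Q)
    (hexc : ¬ ((P = ∅ ∧ Q = Set.univ) ∨ (P = Set.univ ∧ Q = ∅))) :
    parabolicBasis n P ≠ parabolicBasis n Q :=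
  parabolic_bases_distinct_general n P Q hPQ hexc

end
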